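/- arXiv:math/9912226 — 2 statements merged into one kernel-verified Lean document; each statement's English description precedes it below -/
import Mathlib

section
/- In a weak Hopf algebra H, the element S(1₁) ⊗ 1₂ ∈ H_t ⊗ H_t is a separability idempotent for the target counital subalgebra H_t: writing e = S(1₁)⊗1₂, one has m(e) = 1 and (z⊗1)e = e(1⊗z) for all z ∈ H_t. -/
open TensorProduct

set_option maxHeartbeats 1600000
set_option synthInstance.maxHeartbeats 400000

/-- A weak Hopf algebra structure on a `k`-algebra `H` (Böhm–Nill–Szlachányi axioms). -/
structure WeakHopfAlgebra (k : Type*) [Field k] (H : Type*) [Ring H] [Algebra k H] where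
  Δ : H →ₗ[k] H ⊗[k] H
  ε : H →ₗ[k] k
  S : H →ₗ[k] H
  /-- Δ is multiplicative -/
  Δ_mul : ∀ h g : H, Δ (h * g) = Δ h * Δ g
  /-- coassociativity -/
  coassoc : ∀ h : H, (TensorProduct.assoc k H H H) ((Δ.rTensor H) (Δ h)) = (Δ.lTensor H) (Δ h)
  /-- counit axioms -/
  counit_left : ∀ h : H, (TensorProduct.lid k H) ((ε.rTensor H) (Δ h)) = h
  counit_right : ∀ h : H, (TensorProduct.rid k H) ((ε.lTensor H) (Δ h)) = h
  /-- weak multiplicativity of the counit -/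
  weak_counit₁ : ∀ h g f : H,
    ε (h * g * f) = (LinearMap.mul' k k)
      ((TensorProduct.map (ε ∘ₗ LinearMap.mulLeft k h) (ε ∘ₗ LinearMap.mulRight k f)) (Δ g))
  weak_counit₂ : ∀ h g f : H,
    ε (h * g * f) = (LinearMap.mul' k k)
      ((TensorProduct.map (ε ∘ₗ LinearMap.mulRight k f) (ε ∘ₗ LinearMap.mulLeft k h))
        ((TensorProduct.comm k H H) (Δ g)))
  /-- weak comultiplicativity of the unit -/
  weak_unit₁ : (Δ.rTensor H) (Δ 1) =
    (Δ 1 ⊗ₜ[k] (1 : H)) * ((TensorProduct.assoc k H H H).symm ((1 : H) ⊗ₜ[k] Δ 1))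
  weak_unit₂ : (Δ.rTensor H) (Δ 1) =
    ((TensorProduct.assoc k H H H).symm ((1 : H) ⊗ₜ[k] Δ 1)) * (Δ 1 ⊗ₜ[k] (1 : H))
  /-- antipode axioms: h₁S(h₂) = ε_t(h), S(h₁)h₂ = ε_s(h), S(h₁)h₂S(h₃) = S(h) -/
  antipode_right : ∀ h : H, (LinearMap.mul' k H) ((S.lTensor H) (Δ h)) =
    (TensorProduct.lid k H) ((ε.rTensor H) (Δ 1 * (h ⊗ₜ[k] 1)))
  antipode_left : ∀ h : H, (LinearMap.mul' k H) ((S.rTensor H) (Δ h)) =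
    (TensorProduct.rid k H) ((ε.lTensor H) (((1 : H) ⊗ₜ[k] h) * Δ 1))
  antipode_mid : ∀ h : H, (LinearMap.mul' k H)
      ((LinearMap.lTensor H ((LinearMap.mul' k H) ∘ₗ (S.lTensor H)))
        ((S.rTensor (H ⊗[k] H)) ((Δ.lTensor H) (Δ h)))) = S h

namespace WeakHopfAlgebra

variable {k : Type*} [Field k] {H : Type*} [Ring H] [Algebra k H]

/-- the target counital map ε_t(h) = (ε⊗id)(Δ(1)(h⊗1)) -/
noncomputable def εtL (W : WeakHopfAlgebra k H) : H →ₗ[k] H :=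
  (TensorProduct.lid k H).toLinearMap ∘ₗ W.ε.rTensor H ∘ₗ
    LinearMap.mulLeft k (W.Δ 1) ∘ₗ ((TensorProduct.mk k H H).flip 1)

/-- the source counital map ε_s(h) = (id⊗ε)((1⊗h)Δ(1)) -/
noncomputable def εsL (W : WeakHopfAlgebra k H) : H →ₗ[k] H :=
  (TensorProduct.rid k H).toLinearMap ∘ₗ W.ε.lTensor H ∘ₗ
    LinearMap.mulRight k (W.Δ 1) ∘ₗ (TensorProduct.mk k H H 1)

end WeakHopfAlgebra

/-! ### Auxiliary material for the proof of `separability_idempotent`. -/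

namespace WeakHopfSep

open LinearMap WeakHopfAlgebra

variable {k : Type*} [Field k] {H : Type*} [Ring H] [Algebra k H]

/-- generalization of `εtL` with `Δ 1` replaced by an arbitrary element `w`. -/
noncomputable def Tgen (φ : H →ₗ[k] k) (w : H ⊗[k] H) : H →ₗ[k] H :=
  (TensorProduct.lid k H).toLinearMap ∘ₗ φ.rTensor H ∘ₗ
    LinearMap.mulLeft k w ∘ₗ ((TensorProduct.mk k H H).flip 1)

lemma Tgen_apply (φ : H →ₗ[k] k) (w : H ⊗[k] H) (x : H) :
    Tgen φ w x = (TensorProduct.lid k H) ((φ.rTensor H) (w * (x ⊗ₜ[k] (1 : H)))) := rfl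

lemma Tgen_omega (W : WeakHopfAlgebra k H) : Tgen W.ε (W.Δ 1) = W.εtL := rfl

/-- `assoc` is multiplicative. -/
lemma assoc_mul (x y : (H ⊗[k] H) ⊗[k] H) :
    (TensorProduct.assoc k H H H) (x * y) =
      (TensorProduct.assoc k H H H) x * (TensorProduct.assoc k H H H) y := by
  induction x using TensorProduct.induction_on with
  | zero => simp
  | add u v hu hv => simp [add_mul, hu, hv]
  | tmul p c =>
    induction y using TensorProduct.induction_on with
    | zero => simp
    | add u v hu hv => simp [mul_add, hu, hv]
    | tmul q d =>
      induction p using TensorProduct.induction_on with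
      | zero => simp
      | add u v hu hv =>
        simp only [add_tmul, add_mul, map_add] at hu hv ⊢
        rw [hu, hv]
      | tmul a b =>
        induction q using TensorProduct.induction_on with
        | zero => simp
        | add u v hu hv =>
          simp only [add_tmul, mul_add, map_add] at hu hv ⊢
          rw [hu, hv]
        | tmul a' b' =>
          simp [Algebra.TensorProduct.tmul_mul_tmul, TensorProduct.assoc_tmul]

lemma rT_mul_one_right (f : H →ₗ[k] H) (w : H ⊗[k] H) (c : H) :
    (f.rTensor H) (w * ((1 : H) ⊗ₜ[k] c)) = (f.rTensor H w) * ((1 : H) ⊗ₜ[k] c) := by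
  induction w using TensorProduct.induction_on with
  | zero => simp
  | add u v hu hv => simp [add_mul, hu, hv]
  | tmul a b => simp [Algebra.TensorProduct.tmul_mul_tmul]

lemma mulLeft_tmul_rT (f : H →ₗ[k] H) (w : H ⊗[k] H) (c : H) :
    (c ⊗ₜ[k] (1 : H)) * (f.rTensor H w) = ((LinearMap.mulLeft k c ∘ₗ f).rTensor H) w := by
  induction w using TensorProduct.induction_on with
  | zero => simp
  | add u v hu hv => simp [mul_add, hu, hv]
  | tmul a b => simp [Algebra.TensorProduct.tmul_mul_tmul]

lemma rT_comp_mulLeft (f : H →ₗ[k] H) (w : H ⊗[k] H) (c : H) :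
    ((f ∘ₗ LinearMap.mulLeft k c).rTensor H) w = (f.rTensor H) ((c ⊗ₜ[k] (1 : H)) * w) := by
  induction w using TensorProduct.induction_on with
  | zero => simp
  | add u v hu hv => simp [mul_add, hu, hv]
  | tmul a b => simp [Algebra.TensorProduct.tmul_mul_tmul]

lemma rT_comp_mulRight (f : H →ₗ[k] H) (w : H ⊗[k] H) (c : H) :
    ((f ∘ₗ LinearMap.mulRight k c).rTensor H) w = (f.rTensor H) (w * (c ⊗ₜ[k] (1 : H))) := by
  induction w using TensorProduct.induction_on with
  | zero => simp
  | add u v hu hv => simp [add_mul, hu, hv]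
  | tmul a b => simp [Algebra.TensorProduct.tmul_mul_tmul]

lemma lT_mulRight_elt (c : H ⊗[k] H) (w : H ⊗[k] (H ⊗[k] H)) :
    ((LinearMap.mulRight k c).lTensor H) w = w * ((1 : H) ⊗ₜ[k] c) := by
  induction w using TensorProduct.induction_on with
  | zero => simp
  | add u v hu hv => simp [add_mul, hu, hv]
  | tmul a b => simp [Algebra.TensorProduct.tmul_mul_tmul]

lemma lT_map_mul_tmul_one (g : H →ₗ[k] H ⊗[k] H) (w : H ⊗[k] H) (c : H) :
    (g.lTensor H) (w * (c ⊗ₜ[k] (1 : H))) =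
      ((g.lTensor H) w) * (c ⊗ₜ[k] (1 : H ⊗[k] H)) := by
  induction w using TensorProduct.induction_on with
  | zero => simp
  | add u v hu hv => simp [add_mul, hu, hv]
  | tmul a b => simp [Algebra.TensorProduct.tmul_mul_tmul]

lemma mul'_lT_mulLeft (S' : H →ₗ[k] H) (c : H) (w : H ⊗[k] H) :
    LinearMap.mul' k H ((S'.lTensor H) ((c ⊗ₜ[k] (1 : H)) * w)) =
      c * LinearMap.mul' k H ((S'.lTensor H) w) := by
  induction w using TensorProduct.induction_on with
  | zero => simp
  | add u v hu hv => simp [mul_add, hu, hv]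
  | tmul a b => simp [Algebra.TensorProduct.tmul_mul_tmul, LinearMap.mul'_apply, mul_assoc]

lemma one_tmul_mul (a b : H ⊗[k] H) :
    ((1 : H) ⊗ₜ[k] a) * ((1 : H) ⊗ₜ[k] b) = (1 : H) ⊗ₜ[k] (a * b) := by
  simp [Algebra.TensorProduct.tmul_mul_tmul]

/-- evaluation of the key composite on `assoc (a ⊗ 1) * (1 ⊗ b)`. -/
lemma LF (S' : H →ₗ[k] H) (a b : H ⊗[k] H) :
    ((LinearMap.mul' k H).lTensor H)
        (((S'.lTensor H).lTensor H)
          ((TensorProduct.assoc k H H H) (a ⊗ₜ[k] (1 : H)) * ((1 : H) ⊗ₜ[k] b))) =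
      a * ((1 : H) ⊗ₜ[k] (LinearMap.mul' k H ((S'.lTensor H) b))) := by
  induction a using TensorProduct.induction_on with
  | zero => simp
  | add u v hu hv =>
    simp only [add_tmul, map_add, add_mul, hu, hv]
  | tmul a₁ a₂ =>
    induction b using TensorProduct.induction_on with
    | zero => simp
    | add u v hu hv =>
      simp only [map_add, mul_add, tmul_add, hu, hv]
    | tmul b₁ b₂ =>
      simp [TensorProduct.assoc_tmul, Algebra.TensorProduct.tmul_mul_tmul,
        LinearMap.mul'_apply, mul_assoc]

/-- mirror of `LF`. -/
lemma LFs (S' : H →ₗ[k] H) (a b : H ⊗[k] H) :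
    ((LinearMap.mul' k H).rTensor H)
        (((S'.rTensor H).rTensor H)
          ((a ⊗ₜ[k] (1 : H)) * (TensorProduct.assoc k H H H).symm ((1 : H) ⊗ₜ[k] b))) =
      ((LinearMap.mul' k H ((S'.rTensor H) a)) ⊗ₜ[k] (1 : H)) * b := by
  induction a using TensorProduct.induction_on with
  | zero => simp
  | add u v hu hv =>
    simp only [map_add, add_tmul, add_mul, hu, hv]
  | tmul a₁ a₂ =>
    induction b using TensorProduct.induction_on with
    | zero => simp
    | add u v hu hv =>
      simp only [map_add, tmul_add, mul_add, hu, hv]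
    | tmul b₁ b₂ =>
      simp [TensorProduct.assoc_symm_tmul, Algebra.TensorProduct.tmul_mul_tmul,
        LinearMap.mul'_apply, mul_assoc]

/-- regrouping lemma for the middle antipode axiom (pure `mul_assoc` bookkeeping). -/
lemma AM_regroup (S' : H →ₗ[k] H) (w : (H ⊗[k] H) ⊗[k] H) :
    LinearMap.mul' k H
        ((TensorProduct.map (LinearMap.mul' k H ∘ₗ S'.rTensor H) S') w) =
      LinearMap.mul' k H
        (((LinearMap.mul' k H ∘ₗ S'.lTensor H).lTensor H)
          ((S'.rTensor (H ⊗[k] H)) ((TensorProduct.assoc k H H H) w))) := by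
  induction w using TensorProduct.induction_on with
  | zero => simp
  | add u v hu hv => simp [hu, hv]
  | tmul p c =>
    induction p using TensorProduct.induction_on with
    | zero => simp
    | add u v hu hv =>
      simp only [add_tmul, map_add, hu, hv]
    | tmul a b =>
      simp [TensorProduct.assoc_tmul, LinearMap.mul'_apply, mul_assoc]

/-- naturality of `assoc` for a map on the first factor. -/
lemma assoc_nat (f : H →ₗ[k] H) (w : (H ⊗[k] H) ⊗[k] H) :
    (TensorProduct.assoc k H H H) (((f.rTensor H).rTensor H) w) =
      (f.rTensor (H ⊗[k] H)) ((TensorProduct.assoc k H H H) w) := by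
  induction w using TensorProduct.induction_on with
  | zero => simp
  | add u v hu hv => simp [hu, hv]
  | tmul p c =>
    induction p using TensorProduct.induction_on with
    | zero => simp
    | add u v hu hv =>
      simp only [add_tmul, map_add, hu, hv]
    | tmul a b => simp [TensorProduct.assoc_tmul]

/-- evaluation lemma used for `Δ (εt h) = (εt h ⊗ 1) * Δ 1`. -/
lemma E1 (φ : H →ₗ[k] k) (a b : H ⊗[k] H) (h : H) :
    (TensorProduct.lid k (H ⊗[k] H))
        ((φ.rTensor (H ⊗[k] H))
          (((TensorProduct.assoc k H H H) (a ⊗ₜ[k] (1 : H)) * ((1 : H) ⊗ₜ[k] b)) *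
            (h ⊗ₜ[k] (1 : H ⊗[k] H)))) =
      ((Tgen φ a h) ⊗ₜ[k] (1 : H)) * b := by
  induction a using TensorProduct.induction_on with
  | zero => simp [Tgen_apply]
  | add u v hu hv =>
    have hT : Tgen φ (u + v) h = Tgen φ u h + Tgen φ v h := by
      simp [Tgen_apply, add_mul]
    simp only [add_tmul, map_add, add_mul, hu, hv, hT]
  | tmul a₁ a₂ =>
    induction b using TensorProduct.induction_on with
    | zero => simp
    | add u v hu hv =>
      simp only [map_add, mul_add, add_mul, tmul_add, hu, hv]
    | tmul b₁ b₂ =>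
      simp only [TensorProduct.assoc_tmul, Algebra.TensorProduct.tmul_mul_tmul,
        one_mul, mul_one, Tgen_apply, LinearMap.rTensor_tmul, TensorProduct.lid_tmul]
      simp [Algebra.TensorProduct.tmul_mul_tmul, TensorProduct.smul_tmul',
        smul_mul_assoc]

/-- evaluation lemma used for `Δ (εt h) = Δ 1 * (εt h ⊗ 1)`. -/
lemma E2 (φ : H →ₗ[k] k) (a b : H ⊗[k] H) (h : H) :
    (TensorProduct.lid k (H ⊗[k] H))
        ((φ.rTensor (H ⊗[k] H))
          ((((1 : H) ⊗ₜ[k] b) * (TensorProduct.assoc k H H H) (a ⊗ₜ[k] (1 : H))) *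
            (h ⊗ₜ[k] (1 : H ⊗[k] H)))) =
      b * ((Tgen φ a h) ⊗ₜ[k] (1 : H)) := by
  induction a using TensorProduct.induction_on with
  | zero => simp [Tgen_apply]
  | add u v hu hv =>
    have hT : Tgen φ (u + v) h = Tgen φ u h + Tgen φ v h := by
      simp [Tgen_apply, add_mul]
    simp only [add_tmul, map_add, mul_add, add_mul, hu, hv, hT]
  | tmul a₁ a₂ =>
    induction b using TensorProduct.induction_on with
    | zero => simp
    | add u v hu hv =>
      simp only [map_add, mul_add, add_mul, tmul_add, add_tmul, hu, hv]
    | tmul b₁ b₂ =>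
      simp only [TensorProduct.assoc_tmul, Algebra.TensorProduct.tmul_mul_tmul,
        one_mul, mul_one, Tgen_apply, LinearMap.rTensor_tmul, TensorProduct.lid_tmul]
      simp [Algebra.TensorProduct.tmul_mul_tmul, TensorProduct.smul_tmul',
        TensorProduct.tmul_smul, mul_smul_comm, smul_mul_assoc]

/-- evaluation lemma for the step using `weak_unit₂`. -/
lemma L6 (φ : H →ₗ[k] k) (S' : H →ₗ[k] H) (z : H) (a b : H ⊗[k] H) :
    ((((TensorProduct.rid k H).toLinearMap ∘ₗ
          (φ ∘ₗ LinearMap.mulRight k z).lTensor H ∘ₗ S'.rTensor H).rTensor H))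
        (((TensorProduct.assoc k H H H).symm ((1 : H) ⊗ₜ[k] b)) * (a ⊗ₜ[k] (1 : H))) =
      (TensorProduct.map S' ((Tgen φ b) ∘ₗ LinearMap.mulRight k z)) a := by
  induction a using TensorProduct.induction_on with
  | zero => simp
  | add u v hu hv =>
    simp only [add_tmul, map_add, mul_add, hu, hv]
  | tmul a₁ a₂ =>
    induction b using TensorProduct.induction_on with
    | zero => simp [Tgen_apply]
    | add u v hu hv =>
      have hT : ∀ x, Tgen φ (u + v) x = Tgen φ u x + Tgen φ v x := by
        intro x; simp [Tgen_apply, add_mul]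
      simp only [map_add, tmul_add, add_mul, hu, hv, TensorProduct.map_tmul,
        LinearMap.coe_comp, Function.comp_apply, LinearMap.mulRight_apply, hT,
        TensorProduct.tmul_add]
    | tmul b₁ b₂ =>
      simp [TensorProduct.assoc_symm_tmul, Algebra.TensorProduct.tmul_mul_tmul,
        TensorProduct.rid_tmul, TensorProduct.map_tmul, Tgen_apply,
        TensorProduct.lid_tmul, TensorProduct.smul_tmul, mul_assoc]

section W

variable (W : WeakHopfAlgebra k H)

/-- `ε_t = μ ∘ (id ⊗ S) ∘ Δ`. -/
lemma AR' : W.εtL = LinearMap.mul' k H ∘ₗ W.S.lTensor H ∘ₗ W.Δ := by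
  apply LinearMap.ext; intro h
  have := W.antipode_right h
  simp only [LinearMap.coe_comp, Function.comp_apply]
  rw [this]
  rfl

lemma εt_one : W.εtL 1 = 1 := by
  have : W.εtL 1 =
      (TensorProduct.lid k H) ((W.ε.rTensor H) (W.Δ 1 * ((1:H) ⊗ₜ[k] (1:H)))) := rfl
  rw [this, ← Algebra.TensorProduct.one_def, mul_one]
  exact W.counit_left 1

lemma AR1 : LinearMap.mul' k H ((W.S.lTensor H) (W.Δ 1)) = 1 := by
  have := W.antipode_right 1
  rw [this]
  have h1 : W.Δ 1 * ((1:H) ⊗ₜ[k] (1:H)) = W.Δ 1 := by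
    rw [← Algebra.TensorProduct.one_def, mul_one]
  rw [h1]
  exact W.counit_left 1

lemma AL1 : LinearMap.mul' k H ((W.S.rTensor H) (W.Δ 1)) = 1 := by
  have := W.antipode_left 1
  rw [this]
  have h1 : ((1:H) ⊗ₜ[k] (1:H)) * W.Δ 1 = W.Δ 1 := by
    rw [← Algebra.TensorProduct.one_def, one_mul]
  rw [h1]
  exact W.counit_right 1

/-- `Δ²(1)` as `assoc u = assoc (Δ1 ⊗ 1) * (1 ⊗ Δ1)` (from `weak_unit₁`). -/
lemma assoc_u₁ :
    (W.Δ.lTensor H) (W.Δ 1) =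
      (TensorProduct.assoc k H H H) (W.Δ 1 ⊗ₜ[k] (1 : H)) * ((1 : H) ⊗ₜ[k] W.Δ 1) := by
  rw [← W.coassoc 1, W.weak_unit₁, assoc_mul, LinearEquiv.apply_symm_apply]

/-- `Δ²(1)` as `assoc u = (1 ⊗ Δ1) * assoc (Δ1 ⊗ 1)` (from `weak_unit₂`). -/
lemma assoc_u₂ :
    (W.Δ.lTensor H) (W.Δ 1) =
      ((1 : H) ⊗ₜ[k] W.Δ 1) * (TensorProduct.assoc k H H H) (W.Δ 1 ⊗ₜ[k] (1 : H)) := by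
  rw [← W.coassoc 1, W.weak_unit₂, assoc_mul, LinearEquiv.apply_symm_apply]

/-- Lemma F: `(id ⊗ ε_t) (Δ 1) = Δ 1`. -/
lemma lemma_F : (W.εtL.lTensor H) (W.Δ 1) = W.Δ 1 := by
  rw [AR']
  simp only [LinearMap.lTensor_comp, LinearMap.comp_apply]
  rw [assoc_u₁, LF]
  rw [AR1, ← Algebra.TensorProduct.one_def, mul_one]

/-- Lemma J: `Σ 1₁ ⊗ ε_t(1₂ h) = Δ1 * (1 ⊗ ε_t h)`. -/
lemma lemma_J (h : H) :
    ((W.εtL ∘ₗ LinearMap.mulRight k h).lTensor H) (W.Δ 1) =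
      W.Δ 1 * ((1 : H) ⊗ₜ[k] W.εtL h) := by
  have hcomp : W.εtL ∘ₗ LinearMap.mulRight k h =
      (LinearMap.mul' k H ∘ₗ W.S.lTensor H) ∘ₗ
        (LinearMap.mulRight k (W.Δ h) ∘ₗ W.Δ) := by
    apply LinearMap.ext; intro x
    rw [AR']
    simp only [LinearMap.coe_comp, Function.comp_apply, LinearMap.mulRight_apply]
    rw [← W.Δ_mul]
  rw [hcomp]
  simp only [LinearMap.lTensor_comp, LinearMap.comp_apply]
  rw [assoc_u₁, lT_mulRight_elt, mul_assoc, one_tmul_mul]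
  have h1 : W.Δ 1 * W.Δ h = W.Δ h := by rw [← W.Δ_mul, one_mul]
  rw [h1, LF, AR']
  simp only [LinearMap.coe_comp, Function.comp_apply]

/-- `ε_s'(1) = 1`-type statement packaged: `rTensor ε_s' (Δ 1) = Δ 1` (Lemma F'). -/
lemma lemma_F' :
    ((LinearMap.mul' k H ∘ₗ W.S.rTensor H ∘ₗ W.Δ).rTensor H) (W.Δ 1) = W.Δ 1 := by
  simp only [LinearMap.rTensor_comp, LinearMap.comp_apply]
  rw [W.weak_unit₁, LFs, AL1, ← Algebra.TensorProduct.one_def, one_mul]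

/-- left-regrouped middle antipode identity: `S x = Σ ε_s(x₁) S(x₂)`. -/
lemma AM'' (x : H) :
    LinearMap.mul' k H
        ((TensorProduct.map (LinearMap.mul' k H ∘ₗ W.S.rTensor H ∘ₗ W.Δ) W.S)
          (W.Δ x)) = W.S x := by
  have hmid := W.antipode_mid x
  have hco := W.coassoc x
  have hmap : (TensorProduct.map (LinearMap.mul' k H ∘ₗ W.S.rTensor H ∘ₗ W.Δ) W.S)
      (W.Δ x) =
      (TensorProduct.map (LinearMap.mul' k H ∘ₗ W.S.rTensor H) W.S)
        ((W.Δ.rTensor H) (W.Δ x)) := by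
    exact (LinearMap.congr_fun
      (LinearMap.map_comp_rTensor (f := LinearMap.mul' k H ∘ₗ W.S.rTensor H) (g := W.S) (f' := W.Δ))
      (W.Δ x)).symm
  rw [hmap, AM_regroup, hco]
  exact hmid

/-- THE key identity (Lemma G): `(S ⊗ id)(Δ 1) = (ε_t ⊗ id)(Δ 1)`. -/
lemma lemma_G :
    (W.S.rTensor H) (W.Δ 1) = (W.εtL.rTensor H) (W.Δ 1) := by
  -- abbreviation for ε_s'
  set es : H →ₗ[k] H := LinearMap.mul' k H ∘ₗ W.S.rTensor H ∘ₗ W.Δ with hes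
  -- S as the left-grouped composite
  have hS : W.S = LinearMap.mul' k H ∘ₗ (TensorProduct.map es W.S) ∘ₗ W.Δ := by
    apply LinearMap.ext; intro x
    simp only [LinearMap.coe_comp, Function.comp_apply]
    exact (AM'' W x).symm
  -- key: (ε_s' on the first leg of Δ²1) is the identity
  have hu : ((es.rTensor H).rTensor H) ((W.Δ.rTensor H) (W.Δ 1)) =
      (W.Δ.rTensor H) (W.Δ 1) := by
    apply (TensorProduct.assoc k H H H).injective
    rw [assoc_nat, W.coassoc 1]
    have h1 : (es.rTensor (H ⊗[k] H)) ((W.Δ.lTensor H) (W.Δ 1)) =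
        (TensorProduct.map es W.Δ) (W.Δ 1) := by
      rw [← LinearMap.rTensor_comp_lTensor, LinearMap.comp_apply]
    have h2 : (TensorProduct.map es W.Δ) (W.Δ 1) =
        (W.Δ.lTensor H) ((es.rTensor H) (W.Δ 1)) := by
      rw [← LinearMap.lTensor_comp_rTensor, LinearMap.comp_apply]
    rw [h1, h2, lemma_F' W]
  have hmapsplit : TensorProduct.map es W.S = (W.S.lTensor H) ∘ₗ (es.rTensor H) :=
    (LinearMap.lTensor_comp_rTensor (f := es) (g := W.S)).symm
  conv_lhs => rw [hS]
  rw [hmapsplit]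
  simp only [LinearMap.rTensor_comp, LinearMap.comp_apply]
  rw [hu, AR']
  simp only [LinearMap.rTensor_comp, LinearMap.comp_apply]


/-- `(ε_t ⊗ id ⊗ id)(Δ²1) = (S ⊗ id ⊗ id)(Δ²1)` (apply `id ⊗ Δ` to Lemma G). -/
lemma G2u :
    ((W.εtL.rTensor H).rTensor H) ((W.Δ.rTensor H) (W.Δ 1)) =
      ((W.S.rTensor H).rTensor H) ((W.Δ.rTensor H) (W.Δ 1)) := by
  apply (TensorProduct.assoc k H H H).injective
  rw [assoc_nat, assoc_nat, W.coassoc 1]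
  have h1 : ∀ f : H →ₗ[k] H,
      (f.rTensor (H ⊗[k] H)) ((W.Δ.lTensor H) (W.Δ 1)) =
        (W.Δ.lTensor H) ((f.rTensor H) (W.Δ 1)) := by
    intro f
    rw [← LinearMap.comp_apply, LinearMap.rTensor_comp_lTensor,
      ← LinearMap.lTensor_comp_rTensor, LinearMap.comp_apply]
  rw [h1, h1, lemma_G]

lemma Δ_lid (w : k ⊗[k] H) :
    W.Δ ((TensorProduct.lid k H) w) =
      (TensorProduct.lid k (H ⊗[k] H)) ((W.Δ.lTensor k) w) := by
  induction w using TensorProduct.induction_on with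
  | zero => simp
  | add u v hu hv => simp [hu, hv]
  | tmul c x => simp [TensorProduct.lid_tmul]

lemma swap_εΔ (v : H ⊗[k] H) :
    (W.Δ.lTensor k) ((W.ε.rTensor H) v) =
      (W.ε.rTensor (H ⊗[k] H)) ((W.Δ.lTensor H) v) := by
  rw [← LinearMap.comp_apply, LinearMap.lTensor_comp_rTensor,
    ← LinearMap.rTensor_comp_lTensor, LinearMap.comp_apply]

/-- `Δ (ε_t h) = (ε_t h ⊗ 1) * Δ 1`. -/
lemma starR (h : H) :
    W.Δ (W.εtL h) = (W.εtL h ⊗ₜ[k] (1 : H)) * W.Δ 1 := by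
  have e1 : W.εtL h =
      (TensorProduct.lid k H) ((W.ε.rTensor H) (W.Δ 1 * (h ⊗ₜ[k] (1 : H)))) := rfl
  conv_lhs => rw [e1]
  rw [Δ_lid, swap_εΔ, lT_map_mul_tmul_one, assoc_u₁, E1, Tgen_omega]

/-- `Δ (ε_t h) = Δ 1 * (ε_t h ⊗ 1)`. -/
lemma starL (h : H) :
    W.Δ (W.εtL h) = W.Δ 1 * (W.εtL h ⊗ₜ[k] (1 : H)) := by
  have e1 : W.εtL h =
      (TensorProduct.lid k H) ((W.ε.rTensor H) (W.Δ 1 * (h ⊗ₜ[k] (1 : H)))) := rfl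
  conv_lhs => rw [e1]
  rw [Δ_lid, swap_εΔ, lT_map_mul_tmul_one, assoc_u₂, E2, Tgen_omega]

/-- Lemma H: for `z` fixed by `ε_t`, `ε_t (z * g) = z * ε_t g`. -/
lemma lemma_H (z : H) (hz : W.εtL z = z) :
    W.εtL ∘ₗ LinearMap.mulLeft k z = LinearMap.mulLeft k z ∘ₗ W.εtL := by
  have hΔz : W.Δ z = (z ⊗ₜ[k] (1 : H)) * W.Δ 1 := by
    conv_lhs => rw [← hz, starR]
    rw [hz]
  apply LinearMap.ext; intro g
  simp only [LinearMap.coe_comp, Function.comp_apply, LinearMap.mulLeft_apply]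
  have h1 : W.Δ (z * g) = (z ⊗ₜ[k] (1 : H)) * W.Δ g := by
    rw [W.Δ_mul z g, hΔz, mul_assoc, ← W.Δ_mul, one_mul]
  rw [AR']
  simp only [LinearMap.coe_comp, Function.comp_apply]
  rw [h1, mul'_lT_mulLeft]

lemma Tgen_zero' (x : H) : Tgen W.ε (0 : H ⊗[k] H) x = 0 := by
  simp [Tgen_apply]

lemma wc_aux (z w₁ w₂ : H) (t : H ⊗[k] H) :
    (LinearMap.mul' k k
        ((TensorProduct.map (W.ε ∘ₗ LinearMap.mulLeft k w₁)
          (W.ε ∘ₗ LinearMap.mulRight k z)) t)) • w₂ =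
      (TensorProduct.rid k H)
        (((W.ε ∘ₗ LinearMap.mulRight k z).lTensor H)
          (((Tgen W.ε (w₁ ⊗ₜ[k] w₂)).rTensor H) t)) := by
  induction t using TensorProduct.induction_on with
  | zero => simp
  | add u v hu hv => simp [add_smul, hu, hv]
  | tmul t₁ t₂ =>
    simp only [TensorProduct.map_tmul, LinearMap.mul'_apply, LinearMap.coe_comp,
      Function.comp_apply, LinearMap.mulLeft_apply, LinearMap.mulRight_apply,
      LinearMap.rTensor_tmul, LinearMap.lTensor_tmul, TensorProduct.rid_tmul,
      Tgen_apply, Algebra.TensorProduct.tmul_mul_tmul, mul_one,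
      TensorProduct.lid_tmul, smul_smul]
    rw [mul_comm]

lemma wc_T (z x : H) (w : H ⊗[k] H) :
    Tgen W.ε w (x * z) =
      (TensorProduct.rid k H)
        (((W.ε ∘ₗ LinearMap.mulRight k z).lTensor H)
          (((Tgen W.ε w).rTensor H) (W.Δ x))) := by
  induction w using TensorProduct.induction_on with
  | zero =>
    have h0 : Tgen W.ε (0 : H ⊗[k] H) = 0 := by
      apply LinearMap.ext; intro y; simp [Tgen_apply]
    simp [h0]
  | add u v hu hv =>
    have hadd : Tgen W.ε (u + v) = Tgen W.ε u + Tgen W.ε v := by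
      apply LinearMap.ext; intro y; simp [Tgen_apply, add_mul]
    simp only [hadd, LinearMap.add_apply, LinearMap.rTensor_add, map_add, hu, hv]
  | tmul w₁ w₂ =>
    have e1 : Tgen W.ε (w₁ ⊗ₜ[k] w₂) (x * z) = W.ε (w₁ * x * z) • w₂ := by
      simp [Tgen_apply, Algebra.TensorProduct.tmul_mul_tmul, mul_assoc]
    rw [e1, W.weak_counit₁ w₁ x z, wc_aux]

/-- the pointwise identity `ε_t (x z) = Σ ε_t(x₁) ε(x₂ z)`, as a map identity. -/
lemma wc_eps (z : H) :
    W.εtL ∘ₗ LinearMap.mulRight k z =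
      ((TensorProduct.rid k H).toLinearMap ∘ₗ
        (W.ε ∘ₗ LinearMap.mulRight k z).lTensor H ∘ₗ W.εtL.rTensor H) ∘ₗ W.Δ := by
  apply LinearMap.ext; intro x
  simp only [LinearMap.coe_comp, LinearEquiv.coe_coe, Function.comp_apply,
    LinearMap.mulRight_apply]
  rw [← Tgen_omega]
  exact wc_T W z x (W.Δ 1)

end W

end WeakHopfSep

open WeakHopfAlgebra TensorProduct in
/-- S(1(1)) tensor 1(2) is a separability idempotent for the target counital subalgebra. -/
theorem separability_idempotent {k : Type*} [Field k] {H : Type*} [Ring H] [Algebra k H]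
    [FiniteDimensional k H] (W : WeakHopfAlgebra k H) :
    (LinearMap.rTensor H W.S) (W.Δ 1) ∈ LinearMap.range (TensorProduct.map W.εtL W.εtL) ∧
    (LinearMap.mul' k H) ((LinearMap.rTensor H W.S) (W.Δ 1)) = 1 ∧
    ∀ z : H, W.εtL z = z →
      (z ⊗ₜ[k] (1 : H)) * (LinearMap.rTensor H W.S) (W.Δ 1) =
        (LinearMap.rTensor H W.S) (W.Δ 1) * ((1 : H) ⊗ₜ[k] z) := by
  refine ⟨⟨W.Δ 1, ?_⟩, WeakHopfSep.AL1 W, ?_⟩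
  · rw [← LinearMap.rTensor_comp_lTensor (f := W.εtL) (g := W.εtL),
      LinearMap.comp_apply, WeakHopfSep.lemma_F, WeakHopfSep.lemma_G]
  · intro z hz
    have hΔz : W.Δ z = (z ⊗ₜ[k] (1 : H)) * W.Δ 1 := by
      conv_lhs => rw [← hz, WeakHopfSep.starR]
      rw [hz]
    have hΔz' : W.Δ z = W.Δ 1 * (z ⊗ₜ[k] (1 : H)) := by
      conv_lhs => rw [← hz, WeakHopfSep.starL]
      rw [hz]
    have hcomm : (z ⊗ₜ[k] (1 : H)) * W.Δ 1 = W.Δ 1 * (z ⊗ₜ[k] (1 : H)) := by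
      rw [← hΔz, hΔz']
    calc (z ⊗ₜ[k] (1 : H)) * (LinearMap.rTensor H W.S) (W.Δ 1)
        = (z ⊗ₜ[k] (1 : H)) * (W.εtL.rTensor H) (W.Δ 1) := by
          rw [WeakHopfSep.lemma_G]
      _ = ((LinearMap.mulLeft k z ∘ₗ W.εtL).rTensor H) (W.Δ 1) :=
          WeakHopfSep.mulLeft_tmul_rT W.εtL (W.Δ 1) z
      _ = ((W.εtL ∘ₗ LinearMap.mulLeft k z).rTensor H) (W.Δ 1) := by
          rw [← WeakHopfSep.lemma_H W z hz]
      _ = (W.εtL.rTensor H) ((z ⊗ₜ[k] (1 : H)) * W.Δ 1) :=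
          WeakHopfSep.rT_comp_mulLeft W.εtL (W.Δ 1) z
      _ = (W.εtL.rTensor H) (W.Δ 1 * (z ⊗ₜ[k] (1 : H))) := by rw [hcomm]
      _ = ((W.εtL ∘ₗ LinearMap.mulRight k z).rTensor H) (W.Δ 1) :=
          (WeakHopfSep.rT_comp_mulRight W.εtL (W.Δ 1) z).symm
      _ = (((((TensorProduct.rid k H).toLinearMap ∘ₗ
              (W.ε ∘ₗ LinearMap.mulRight k z).lTensor H ∘ₗ W.εtL.rTensor H) ∘ₗ
              W.Δ)).rTensor H) (W.Δ 1) := by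
          rw [WeakHopfSep.wc_eps W z]
      _ = ((((TensorProduct.rid k H).toLinearMap ∘ₗ
              (W.ε ∘ₗ LinearMap.mulRight k z).lTensor H ∘ₗ W.εtL.rTensor H)).rTensor H)
            ((W.Δ.rTensor H) (W.Δ 1)) := by
          rw [LinearMap.rTensor_comp, LinearMap.comp_apply]
      _ = ((((TensorProduct.rid k H).toLinearMap ∘ₗ
              (W.ε ∘ₗ LinearMap.mulRight k z).lTensor H ∘ₗ W.S.rTensor H)).rTensor H)
            ((W.Δ.rTensor H) (W.Δ 1)) := by
          simp only [LinearMap.rTensor_comp, LinearMap.comp_apply]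
          rw [WeakHopfSep.G2u]
      _ = ((((TensorProduct.rid k H).toLinearMap ∘ₗ
              (W.ε ∘ₗ LinearMap.mulRight k z).lTensor H ∘ₗ W.S.rTensor H)).rTensor H)
            ((TensorProduct.assoc k H H H).symm ((1 : H) ⊗ₜ[k] W.Δ 1) *
              (W.Δ 1 ⊗ₜ[k] (1 : H))) := by
          rw [← W.weak_unit₂]
      _ = (TensorProduct.map W.S
            ((WeakHopfSep.Tgen W.ε (W.Δ 1)) ∘ₗ LinearMap.mulRight k z)) (W.Δ 1) :=
          WeakHopfSep.L6 W.ε W.S z (W.Δ 1) (W.Δ 1)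
      _ = (W.S.rTensor H)
            (((W.εtL ∘ₗ LinearMap.mulRight k z).lTensor H) (W.Δ 1)) := by
          rw [WeakHopfSep.Tgen_omega,
            ← LinearMap.rTensor_comp_lTensor (f := W.S)
              (g := W.εtL ∘ₗ LinearMap.mulRight k z), LinearMap.comp_apply]
      _ = (W.S.rTensor H) (W.Δ 1 * ((1 : H) ⊗ₜ[k] W.εtL z)) := by
          rw [WeakHopfSep.lemma_J]
      _ = (W.S.rTensor H) (W.Δ 1 * ((1 : H) ⊗ₜ[k] z)) := by rw [hz]
      _ = (LinearMap.rTensor H W.S) (W.Δ 1) * ((1 : H) ⊗ₜ[k] z) :=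
          WeakHopfSep.rT_mul_one_right W.S (W.Δ 1) z
end

section
/- Let H be a weak Hopf algebra and A a left H-module algebra. The smash product A#H, defined on the relative tensor product A ⊗_{H_t} H with multiplication (x#h)(y#g) = x(h₁·y) # h₂g and unit 1#1, is an associative unital algebra. -/
open TensorProduct

namespace WeakHopfAlgebra

variable {k : Type*} [Field k] {H : Type*} [Ring H] [Algebra k H]
variable {A : Type*} [Ring A] [Algebra k A]

/-- A left `H`-module algebra structure on `A`: an `H`-module action `act` such that
`h·(xy) = (h₁·x)(h₂·y)` and `h·1 = ε_t(h)·1`. -/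
structure ModuleAlgebra (W : WeakHopfAlgebra k H) (A : Type*) [Ring A] [Algebra k A] where
  act : H →ₗ[k] A →ₗ[k] A
  act_one : ∀ x : A, act 1 x = x
  act_mul : ∀ (h g : H) (x : A), act (h * g) x = act h (act g x)
  /-- h·(xy) = (h₁·x)(h₂·y) -/
  act_algebra : ∀ (h : H) (x y : A), act h (x * y) =
    (LinearMap.mul' k A) ((TensorProduct.map (act.flip x) (act.flip y)) (W.Δ h))
  /-- h·1 = ε_t(h)·1 -/
  act_unit : ∀ h : H, act h 1 = act (W.εtL h) 1

variable (W : WeakHopfAlgebra k H)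

/-- The relations defining `A ⊗_{H_t} H` inside `A ⊗_k H` : `x·z ⊗ h - x ⊗ zh`
for `z ∈ H_t`, where `x·z = x(z·1)`. -/
noncomputable def smashRel (M : ModuleAlgebra W A) : Submodule k (A ⊗[k] H) :=
  Submodule.span k {u | ∃ (x : A) (z h : H), W.εtL z = z ∧
    u = (x * M.act z 1) ⊗ₜ[k] h - x ⊗ₜ[k] (z * h)}

/-- The underlying vector space of the smash product `A # H = A ⊗_{H_t} H`. -/
noncomputable def Smash (M : ModuleAlgebra W A) := (A ⊗[k] H) ⧸ smashRel W M

noncomputable instance (M : ModuleAlgebra W A) : AddCommGroup (Smash W M) :=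
  inferInstanceAs (AddCommGroup ((A ⊗[k] H) ⧸ smashRel W M))

noncomputable instance (M : ModuleAlgebra W A) : Module k (Smash W M) :=
  inferInstanceAs (Module k ((A ⊗[k] H) ⧸ smashRel W M))

/-- The class `x # h` of `x ⊗ h` in the smash product. -/
noncomputable def smashMk (M : ModuleAlgebra W A) : A ⊗[k] H →ₗ[k] Smash W M :=
  (smashRel W M).mkQ

/-- The map `(x ⊗ h) ⊗ (y ⊗ g) ↦ x(h₁·y) ⊗ h₂g` on `(A ⊗ H) ⊗ (A ⊗ H)`. -/
noncomputable def smashMulAux (M : ModuleAlgebra W A) :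
    (A ⊗[k] H) ⊗[k] (A ⊗[k] H) →ₗ[k] A ⊗[k] H :=
  LinearMap.rTensor H (LinearMap.mul' k A) ∘ₗ
  (TensorProduct.assoc k A A H).symm.toLinearMap ∘ₗ
  LinearMap.lTensor A (LinearMap.rTensor H (TensorProduct.lift M.act)) ∘ₗ
  LinearMap.lTensor A (TensorProduct.assoc k H A H).symm.toLinearMap ∘ₗ
  (TensorProduct.assoc k A H (A ⊗[k] H)).toLinearMap ∘ₗ
  (TensorProduct.tensorTensorTensorComm k A A H H).toLinearMap ∘ₗ
  LinearMap.lTensor (A ⊗[k] A) (LinearMap.lTensor H (LinearMap.mul' k H)) ∘ₗ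
  LinearMap.lTensor (A ⊗[k] A) (TensorProduct.assoc k H H H).toLinearMap ∘ₗ
  LinearMap.lTensor (A ⊗[k] A) (LinearMap.rTensor H W.Δ) ∘ₗ
  (TensorProduct.tensorTensorTensorComm k A H A H).toLinearMap

/-- `μ` is the multiplication of the smash product `A # H`:
`(x#h)(y#g) = x(h₁·y) # h₂g`. -/
noncomputable def IsSmashMul (M : ModuleAlgebra W A)
    (μ : Smash W M →ₗ[k] Smash W M →ₗ[k] Smash W M) : Prop :=
  ∀ u v : A ⊗[k] H, μ (smashMk W M u) (smashMk W M v) =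
    smashMk W M (smashMulAux W M (u ⊗ₜ[k] v))

/-- The unit `1 # 1` of the smash product. -/
noncomputable def smashOne (M : ModuleAlgebra W A) : Smash W M :=
  smashMk W M ((1 : A) ⊗ₜ[k] (1 : H))

/-- The left action `φ ⇀ h = h₁⟨φ, h₂⟩` of `H^*` on `H`. -/
noncomputable def coact (φ : Module.Dual k H) : H →ₗ[k] H :=
  (TensorProduct.rid k H).toLinearMap ∘ₗ (LinearMap.lTensor H φ) ∘ₗ W.Δ

/-- The convolution product on `H^*`: `⟨φψ, h⟩ = ⟨φ ⊗ ψ, Δ h⟩`. -/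
noncomputable def dmul (φ ψ : Module.Dual k H) : Module.Dual k H :=
  (LinearMap.mul' k k) ∘ₗ (TensorProduct.map φ ψ) ∘ₗ W.Δ

/-- The target counital map of the dual weak Hopf algebra `H^*`:
`⟨ε_t^*(φ), h⟩ = Σ ε(1₁h) φ(1₂)`. -/
noncomputable def dualEt (φ : Module.Dual k H) : Module.Dual k H :=
  (LinearMap.mul' k k) ∘ₗ (TensorProduct.map W.ε φ) ∘ₗ
    LinearMap.mulLeft k (W.Δ 1) ∘ₗ ((TensorProduct.mk k H H).flip 1)

/-- The comultiplication of `H^*`, dual to the multiplication of `H`. -/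
noncomputable def comulD [FiniteDimensional k H] :
    Module.Dual k H →ₗ[k] Module.Dual k H ⊗[k] Module.Dual k H :=
  (TensorProduct.dualDistribEquiv k H H).symm.toLinearMap ∘ₗ (LinearMap.mul' k H).dualMap

/-- The convolution product on `H^*` as a bilinear map. -/
noncomputable def dmulL : Module.Dual k H →ₗ[k] Module.Dual k H →ₗ[k] Module.Dual k H :=
  LinearMap.mk₂ k (dmul W)
    (by intros; ext; simp [dmul, TensorProduct.map_add_left])
    (by intros; ext; simp [dmul, TensorProduct.map_smul_left])
    (by intros; ext; simp [dmul, TensorProduct.map_add_right])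
    (by intros; ext; simp [dmul, TensorProduct.map_smul_right])

/-- The action `φ ⇀ h` as a bilinear map. -/
noncomputable def coactL : Module.Dual k H →ₗ[k] H →ₗ[k] H :=
  LinearMap.mk₂ k (fun φ h => coact W φ h)
    (fun φ φ' h => by simp [coact, LinearMap.lTensor_add])
    (fun c φ h => by simp [coact, LinearMap.lTensor_smul])
    (fun φ h h' => map_add _ _ _)
    (fun c φ h => map_smul _ _ _)

end WeakHopfAlgebra

open TensorProduct
namespace WeakHopfAlgebra
variable {k : Type*} [Field k] {H : Type*} [Ring H] [Algebra k H]
variable (W : WeakHopfAlgebra k H)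

lemma εtL_apply (h : H) :
    W.εtL h = TensorProduct.lid k H ((W.ε.rTensor H) (W.Δ 1 * (h ⊗ₜ[k] 1))) := rfl

lemma delta_one_mul (h : H) : W.Δ 1 * W.Δ h = W.Δ h := by rw [← W.Δ_mul, one_mul]
lemma delta_mul_one (h : H) : W.Δ h * W.Δ 1 = W.Δ h := by rw [← W.Δ_mul, mul_one]

lemma lid_eps_mul_right (u : H ⊗[k] H) (y : H) :
    TensorProduct.lid k H ((W.ε.rTensor H) (u * ((1:H) ⊗ₜ[k] y))) =
      TensorProduct.lid k H ((W.ε.rTensor H) u) * y := by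
  induction u using TensorProduct.induction_on with
  | zero => simp
  | tmul a b => simp [Algebra.TensorProduct.tmul_mul_tmul, smul_mul_assoc]
  | add u v hu hv => simp [add_mul, hu, hv]

lemma eps_t_mul_apply (h : H) :
    LinearMap.mul' k H ((W.εtL.rTensor H) (W.Δ h)) = h := by
  have key : (LinearMap.mul' k H) ∘ₗ (W.εtL.rTensor H) =
      (TensorProduct.lid k H).toLinearMap ∘ₗ W.ε.rTensor H ∘ₗ LinearMap.mulLeft k (W.Δ 1) := by
    apply TensorProduct.ext'
    intro x y
    have : W.Δ 1 * (x ⊗ₜ[k] y) = (W.Δ 1 * (x ⊗ₜ[k] (1:H))) * ((1:H) ⊗ₜ[k] y) := by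
      rw [mul_assoc, Algebra.TensorProduct.tmul_mul_tmul, mul_one, one_mul]
    simp [εtL_apply, this, lid_eps_mul_right]
  have := LinearMap.congr_fun key (W.Δ h)
  simpa [delta_one_mul, W.counit_left h] using this
end WeakHopfAlgebra

set_option synthInstance.maxHeartbeats 400000
set_option maxHeartbeats 1000000
set_option linter.dupNamespace false
open TensorProduct
section Generic
variable {k : Type*} [Field k] {A B C D : Type*} [Ring A] [Ring B] [Ring C] [Ring D]
  [Algebra k A] [Algebra k B] [Algebra k C] [Algebra k D]

lemma assoc_mul' (u v : (A ⊗[k] B) ⊗[k] C) :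
    TensorProduct.assoc k A B C (u*v)
      = TensorProduct.assoc k A B C u * TensorProduct.assoc k A B C v :=
  map_mul (Algebra.TensorProduct.assoc k k k A B C) u v

lemma ltensor_mul (f : B →ₗ[k] D) (hf : ∀ x y, f (x*y) = f x * f y) (u v : A ⊗[k] B) :
    f.lTensor A (u*v) = f.lTensor A u * f.lTensor A v := by
  induction u using TensorProduct.induction_on with
  | zero => simp
  | tmul a b =>
    induction v using TensorProduct.induction_on with
    | zero => simp
    | tmul a' b' => simp [Algebra.TensorProduct.tmul_mul_tmul, hf]
    | add u v hu hv => simp [mul_add, hu, hv]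
  | add u v hu hv => simp [add_mul, hu, hv]
end Generic

namespace WeakHopfAlgebra
variable {k : Type*} [Field k] {H : Type*} [Ring H] [Algebra k H]
variable (W : WeakHopfAlgebra k H)

lemma X_eq₁ : (W.Δ.lTensor H) (W.Δ 1) =
    TensorProduct.assoc k H H H (W.Δ 1 ⊗ₜ[k] (1:H)) * ((1:H) ⊗ₜ[k] W.Δ 1) := by
  rw [← W.coassoc 1, W.weak_unit₁, assoc_mul']
  simp

lemma X_eq₂ : (W.Δ.lTensor H) (W.Δ 1) =
    ((1:H) ⊗ₜ[k] W.Δ 1) * TensorProduct.assoc k H H H (W.Δ 1 ⊗ₜ[k] (1:H)) := by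
  rw [← W.coassoc 1, W.weak_unit₂, assoc_mul']
  simp

lemma g_assoc (u w : H ⊗[k] H) (h : H) :
    TensorProduct.lid k (H ⊗[k] H) ((W.ε.rTensor (H ⊗[k] H))
      (TensorProduct.assoc k H H H (u ⊗ₜ[k] (1:H)) * (h ⊗ₜ[k] w))) =
    ((TensorProduct.lid k H ((W.ε.rTensor H) (u * (h ⊗ₜ[k] (1:H))))) ⊗ₜ[k] (1:H)) * w := by
  induction u using TensorProduct.induction_on with
  | zero => simp [zero_tmul]
  | tmul a b =>
    simp [Algebra.TensorProduct.tmul_mul_tmul, ← TensorProduct.smul_tmul', smul_mul_assoc]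
  | add u v hu hv => simp [add_tmul, add_mul, hu, hv]

lemma Δ_εtL (h : H) : W.Δ (W.εtL h) = (W.εtL h ⊗ₜ[k] (1:H)) * W.Δ 1 := by
  have comp : W.Δ ∘ₗ ((TensorProduct.lid k H).toLinearMap ∘ₗ W.ε.rTensor H) =
      (TensorProduct.lid k (H ⊗[k] H)).toLinearMap ∘ₗ W.ε.rTensor (H ⊗[k] H) ∘ₗ
        W.Δ.lTensor H := by
    apply TensorProduct.ext'
    intro a b
    simp
  have e1 : W.Δ (W.εtL h) = TensorProduct.lid k (H ⊗[k] H) ((W.ε.rTensor (H ⊗[k] H))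
      ((W.Δ.lTensor H) (W.Δ 1 * (h ⊗ₜ[k] (1:H))))) := by
    rw [εtL_apply]
    exact LinearMap.congr_fun comp (W.Δ 1 * (h ⊗ₜ[k] (1:H)))
  rw [e1, ltensor_mul W.Δ W.Δ_mul, X_eq₁]
  simp only [LinearMap.lTensor_tmul]
  rw [mul_assoc, Algebra.TensorProduct.tmul_mul_tmul, one_mul, delta_one_mul W 1]
  rw [g_assoc, εtL_apply]

lemma εtL_comm (h : H) :
    (W.εtL h ⊗ₜ[k] (1:H)) * W.Δ 1 = W.Δ 1 * (W.εtL h ⊗ₜ[k] (1:H)) := by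
  set K : H ⊗[k] (H ⊗[k] H) →ₗ[k] H ⊗[k] H :=
    (TensorProduct.lid k (H ⊗[k] H)).toLinearMap ∘ₗ
      ((W.ε ∘ₗ LinearMap.mulRight k h).rTensor (H ⊗[k] H)) with hK
  have ca : ∀ u : H ⊗[k] H, K (TensorProduct.assoc k H H H (u ⊗ₜ[k] (1:H))) =
      (TensorProduct.lid k H ((W.ε.rTensor H) (u * (h ⊗ₜ[k] (1:H))))) ⊗ₜ[k] (1:H) := by
    intro u
    induction u using TensorProduct.induction_on with
    | zero => simp [zero_tmul]
    | tmul a b => simp [hK, Algebra.TensorProduct.tmul_mul_tmul, TensorProduct.smul_tmul']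
    | add u v hu hv => simp_all [add_tmul, add_mul]
  have cb : ∀ (u : H ⊗[k] (H ⊗[k] H)) (w : H ⊗[k] H),
      K (u * ((1:H) ⊗ₜ[k] w)) = K u * w := by
    intro u w
    induction u using TensorProduct.induction_on with
    | zero => simp
    | tmul a p => simp [hK, Algebra.TensorProduct.tmul_mul_tmul, smul_mul_assoc]
    | add u v hu hv => simp [add_mul, hu, hv]
  have cc : ∀ (w : H ⊗[k] H) (u : H ⊗[k] H),
      K (((1:H) ⊗ₜ[k] w) * TensorProduct.assoc k H H H (u ⊗ₜ[k] (1:H))) =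
      w * ((TensorProduct.lid k H ((W.ε.rTensor H) (u * (h ⊗ₜ[k] (1:H))))) ⊗ₜ[k] (1:H)) := by
    intro w u
    induction u using TensorProduct.induction_on with
    | zero => simp [zero_tmul]
    | tmul a b => simp [hK, Algebra.TensorProduct.tmul_mul_tmul,
        ← TensorProduct.smul_tmul', mul_smul_comm]
    | add u v hu hv => simp_all [add_tmul, mul_add, add_mul]
  have h1 : K ((W.Δ.lTensor H) (W.Δ 1)) = (W.εtL h ⊗ₜ[k] (1:H)) * W.Δ 1 := by
    rw [X_eq₁, cb, ca, εtL_apply]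
  have h2 : K ((W.Δ.lTensor H) (W.Δ 1)) = W.Δ 1 * (W.εtL h ⊗ₜ[k] (1:H)) := by
    rw [X_eq₂, cc, εtL_apply]
  rw [← h1, h2]

lemma εtL_idem (h : H) : W.εtL (W.εtL h) = W.εtL h := by
  have : W.Δ 1 * (W.εtL h ⊗ₜ[k] (1:H)) = W.Δ (W.εtL h) := by
    rw [Δ_εtL, εtL_comm]
  rw [εtL_apply, this, W.counit_left]

lemma Δ_z {z : H} (hz : W.εtL z = z) : W.Δ z = (z ⊗ₜ[k] (1:H)) * W.Δ 1 := by
  conv_lhs => rw [← hz]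
  rw [Δ_εtL, hz]

lemma Δ_z' {z : H} (hz : W.εtL z = z) : W.Δ z = W.Δ 1 * (z ⊗ₜ[k] (1:H)) := by
  rw [Δ_z W hz]; conv_lhs => rw [← hz]
  rw [εtL_comm, hz]

lemma Δ_zmul {z : H} (hz : W.εtL z = z) (h : H) :
    W.Δ (z * h) = (z ⊗ₜ[k] (1:H)) * W.Δ h := by
  rw [W.Δ_mul, Δ_z W hz, mul_assoc, delta_one_mul]

lemma Δ_mulz {z : H} (hz : W.εtL z = z) (h : H) :
    W.Δ (h * z) = W.Δ h * (z ⊗ₜ[k] (1:H)) := by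
  rw [W.Δ_mul, Δ_z' W hz, ← mul_assoc, delta_mul_one]

lemma Ne_e : (W.εtL.lTensor H) (W.Δ 1) = W.Δ 1 := by
  set f : H ⊗[k] H →ₗ[k] H := (TensorProduct.lid k H).toLinearMap ∘ₗ W.ε.rTensor H with hf
  set Q : H ⊗[k] (H ⊗[k] H) →ₗ[k] H ⊗[k] H := f.lTensor H with hQ
  have claim1 : ∀ u : H ⊗[k] H, (W.εtL.lTensor H) u =
      Q (((1:H) ⊗ₜ[k] W.Δ 1) * TensorProduct.assoc k H H H (u ⊗ₜ[k] (1:H))) := by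
    intro u
    induction u using TensorProduct.induction_on with
    | zero => simp [zero_tmul]
    | tmul a b =>
      simp [hQ, hf, Algebra.TensorProduct.tmul_mul_tmul, εtL_apply]
    | add u v hu hv => simp_all [add_tmul, mul_add]
  have claim3 : Q ∘ₗ (W.Δ.lTensor H) = LinearMap.id := by
    rw [hQ, ← LinearMap.lTensor_comp]
    have : f ∘ₗ W.Δ = LinearMap.id := by
      apply LinearMap.ext; intro x; simp [hf, W.counit_left]
    rw [this, LinearMap.lTensor_id]
  calc (W.εtL.lTensor H) (W.Δ 1)
      = Q (((1:H) ⊗ₜ[k] W.Δ 1) * TensorProduct.assoc k H H H (W.Δ 1 ⊗ₜ[k] (1:H))) :=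
        claim1 (W.Δ 1)
    _ = Q ((W.Δ.lTensor H) (W.Δ 1)) := by rw [← X_eq₂]
    _ = W.Δ 1 := by rw [← LinearMap.comp_apply, claim3]; rfl

end WeakHopfAlgebra

namespace WeakHopfAlgebra
variable {k : Type*} [Field k] {H : Type*} [Ring H] [Algebra k H]
variable {A : Type*} [Ring A] [Algebra k A]
variable (W : WeakHopfAlgebra k H)

lemma act_Ht (M : ModuleAlgebra W A) {z : H} (hz : W.εtL z = z) (w : A) :
    M.act z w = M.act z 1 * w := by
  have h0 : M.act z w = M.act z (1 * w) := by rw [one_mul]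
  rw [h0, M.act_algebra, Δ_z' W hz]
  have claim : ∀ u : H ⊗[k] H,
      LinearMap.mul' k A ((TensorProduct.map (M.act.flip 1) (M.act.flip w)) (u * (z ⊗ₜ[k] (1:H)))) =
      LinearMap.mul' k A ((TensorProduct.map (M.act.flip (M.act z 1)) (M.act.flip w)) u) := by
    intro u
    induction u using TensorProduct.induction_on with
    | zero => simp
    | tmul a b => simp [Algebra.TensorProduct.tmul_mul_tmul, M.act_mul]
    | add u v hu hv => simp [add_mul, hu, hv]
  rw [claim]
  rw [← M.act_algebra, M.act_one]

lemma rel_move (M : ModuleAlgebra W A) (x' : A) (w g' : H) :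
    smashMk W M ((x' * M.act (W.εtL w) 1) ⊗ₜ[k] g') =
      smashMk W M (x' ⊗ₜ[k] (W.εtL w * g')) := by
  have hmem : ((x' * M.act (W.εtL w) 1) ⊗ₜ[k] g' : A ⊗[k] H) - x' ⊗ₜ[k] (W.εtL w * g')
      ∈ smashRel W M := Submodule.subset_span ⟨x', W.εtL w, g', εtL_idem W w, rfl⟩
  exact (Submodule.Quotient.eq _).mpr hmem

/-- core form of the smash multiplication -/
noncomputable def Psi (M : ModuleAlgebra W A) (x : A) :
    (H ⊗[k] H) ⊗[k] (A ⊗[k] H) →ₗ[k] A ⊗[k] H :=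
  (TensorProduct.map ((LinearMap.mulLeft k x) ∘ₗ TensorProduct.lift M.act)
      (LinearMap.mul' k H)) ∘ₗ (TensorProduct.tensorTensorTensorComm k H H A H).toLinearMap

@[simp] lemma Psi_tmul (M : ModuleAlgebra W A) (x : A) (a c : H) (Y : A) (G : H) :
    Psi W M x ((a ⊗ₜ[k] c) ⊗ₜ[k] (Y ⊗ₜ[k] G)) = (x * M.act a Y) ⊗ₜ[k] (c * G) := by
  simp [Psi]

lemma aux_tmul (M : ModuleAlgebra W A) (x : A) (h : H) (y : A) (g : H) :
    smashMulAux W M ((x ⊗ₜ[k] h) ⊗ₜ[k] (y ⊗ₜ[k] g)) = Psi W M x (W.Δ h ⊗ₜ[k] (y ⊗ₜ[k] g)) := by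
  simp only [smashMulAux, LinearMap.comp_apply, LinearEquiv.coe_coe,
    TensorProduct.tensorTensorTensorComm_tmul, LinearMap.lTensor_tmul, LinearMap.rTensor_tmul]
  generalize W.Δ h = t
  induction t using TensorProduct.induction_on with
  | zero =>
    simp only [TensorProduct.zero_tmul, TensorProduct.tmul_zero, LinearMap.map_zero,
      LinearEquiv.map_zero]
  | tmul a b =>
    simp [Algebra.TensorProduct.tmul_mul_tmul, TensorProduct.assoc_symm_tmul]
  | add s t hs ht =>
    simp only [TensorProduct.add_tmul, TensorProduct.tmul_add, LinearMap.map_add,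
      LinearEquiv.map_add] at hs ht ⊢
    rw [hs, ht]

lemma aux_tmul' (M : ModuleAlgebra W A) (x : A) (h : H) (v : A ⊗[k] H) :
    smashMulAux W M ((x ⊗ₜ[k] h) ⊗ₜ[k] v) = Psi W M x (W.Δ h ⊗ₜ[k] v) := by
  induction v using TensorProduct.induction_on with
  | zero => simp [TensorProduct.tmul_zero]
  | tmul y g => exact aux_tmul W M x h y g
  | add v w hv hw =>
    simp only [TensorProduct.tmul_add, map_add] at hv hw ⊢
    rw [hv, hw]

end WeakHopfAlgebra

namespace WeakHopfAlgebra
variable {k : Type*} [Field k] {H : Type*} [Ring H] [Algebra k H]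
variable {A : Type*} [Ring A] [Algebra k A]
variable (W : WeakHopfAlgebra k H)

section WD
variable (M : ModuleAlgebra W A)

/-- auxiliary map for right well-definedness: `(a⊗b)⊗c ↦ x(a·y)(ε_t(bz)·1) # cg` -/
noncomputable def P1 (x y : A) (z g : H) : ((H ⊗[k] H) ⊗[k] H) →ₗ[k] Smash W M :=
  smashMk W M ∘ₗ TensorProduct.map
    (LinearMap.mulLeft k x ∘ₗ LinearMap.mul' k A ∘ₗ
      TensorProduct.map (M.act.flip y) (M.act.flip 1 ∘ₗ W.εtL ∘ₗ LinearMap.mulRight k z))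
    (LinearMap.mulRight k g)

@[simp] lemma P1_tmul (x y : A) (z g a b c : H) :
    P1 W M x y z g ((a ⊗ₜ[k] b) ⊗ₜ[k] c) =
      smashMk W M ((x * (M.act a y * M.act (W.εtL (b * z)) 1)) ⊗ₜ[k] (c * g)) := by
  simp [P1]

/-- auxiliary map: `a⊗(b⊗c) ↦ x(a·y) # ε_t(bz)(cg)` -/
noncomputable def P2 (x y : A) (z g : H) : (H ⊗[k] (H ⊗[k] H)) →ₗ[k] Smash W M :=
  smashMk W M ∘ₗ TensorProduct.map
    (LinearMap.mulLeft k x ∘ₗ M.act.flip y)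
    (LinearMap.mul' k H ∘ₗ
      TensorProduct.map (W.εtL ∘ₗ LinearMap.mulRight k z) (LinearMap.mulRight k g))

@[simp] lemma P2_tmul (x y : A) (z g a b c : H) :
    P2 W M x y z g (a ⊗ₜ[k] (b ⊗ₜ[k] c)) =
      smashMk W M ((x * M.act a y) ⊗ₜ[k] (W.εtL (b * z) * (c * g))) := by
  simp [P2]

lemma wd_right (x : A) (h : H) (y : A) {z : H} (hz : W.εtL z = z) (g : H) :
    smashMk W M (Psi W M x (W.Δ h ⊗ₜ[k] ((y * M.act z 1) ⊗ₜ[k] g))) =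
      smashMk W M (Psi W M x (W.Δ h ⊗ₜ[k] (y ⊗ₜ[k] (z * g)))) := by
  have c1 : ∀ s : H ⊗[k] H,
      smashMk W M (Psi W M x (s ⊗ₜ[k] ((y * M.act z 1) ⊗ₜ[k] g))) =
        P1 W M x y z g ((W.Δ.rTensor H) s) := by
    intro s
    induction s using TensorProduct.induction_on with
    | zero => simp [TensorProduct.zero_tmul]
    | tmul a b =>
      rw [Psi_tmul, M.act_algebra a y (M.act z 1), LinearMap.rTensor_tmul]
      have c1' : ∀ r : H ⊗[k] H,
          smashMk W M ((x * LinearMap.mul' k A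
              ((TensorProduct.map (M.act.flip y) (M.act.flip (M.act z 1))) r)) ⊗ₜ[k] (b * g)) =
            P1 W M x y z g (r ⊗ₜ[k] b) := by
        intro r
        induction r using TensorProduct.induction_on with
        | zero => simp [TensorProduct.zero_tmul]
        | tmul α β =>
          have e1 : M.act β (M.act z 1) = M.act (W.εtL (β * z)) 1 := by
            rw [← M.act_mul, M.act_unit]
          simp [e1]
        | add r r' hr hr' =>
          simp only [map_add, LinearMap.add_apply, mul_add, TensorProduct.add_tmul,
            TensorProduct.tmul_add] at hr hr' ⊢
          rw [← hr, ← hr']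
      exact c1' (W.Δ a)
    | add s s' hs hs' =>
      simp only [TensorProduct.add_tmul, map_add] at hs hs' ⊢
      rw [hs, hs']
  have c2 : ∀ u : (H ⊗[k] H) ⊗[k] H,
      P1 W M x y z g u = P2 W M x y z g (TensorProduct.assoc k H H H u) := by
    intro u
    have : P1 W M x y z g = (P2 W M x y z g) ∘ₗ (TensorProduct.assoc k H H H).toLinearMap := by
      apply TensorProduct.ext_threefold
      intro a b c
      simp only [LinearMap.comp_apply, LinearEquiv.coe_coe, TensorProduct.assoc_tmul,
        P1_tmul, P2_tmul]
      rw [← mul_assoc, rel_move W M (x * M.act a y) (b * z) (c * g)]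
    rw [this]; rfl
  have c3 : ∀ s : H ⊗[k] H,
      P2 W M x y z g ((W.Δ.lTensor H) s) =
        smashMk W M (Psi W M x (s ⊗ₜ[k] (y ⊗ₜ[k] (z * g)))) := by
    intro s
    induction s using TensorProduct.induction_on with
    | zero => simp [TensorProduct.zero_tmul]
    | tmul a b =>
      rw [LinearMap.lTensor_tmul, Psi_tmul]
      have c3' : ∀ r : H ⊗[k] H,
          LinearMap.mul' k H ((TensorProduct.map (W.εtL ∘ₗ LinearMap.mulRight k z)
            (LinearMap.mulRight k g)) r) =
          LinearMap.mul' k H ((W.εtL.rTensor H) (r * (z ⊗ₜ[k] (1:H)))) * g := by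
        intro r
        induction r using TensorProduct.induction_on with
        | zero => simp
        | tmul α β => simp [Algebra.TensorProduct.tmul_mul_tmul, mul_assoc]
        | add r r' hr hr' => simp [add_mul, hr, hr']
      have e2 : LinearMap.mul' k H ((TensorProduct.map (W.εtL ∘ₗ LinearMap.mulRight k z)
          (LinearMap.mulRight k g)) (W.Δ b)) = b * (z * g) := by
        rw [c3', ← Δ_mulz W hz b, eps_t_mul_apply, mul_assoc]
      have : ∀ v : H ⊗[k] H, P2 W M x y z g (a ⊗ₜ[k] v) =
          smashMk W M ((x * M.act a y) ⊗ₜ[k] (LinearMap.mul' k H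
            ((TensorProduct.map (W.εtL ∘ₗ LinearMap.mulRight k z)
              (LinearMap.mulRight k g)) v))) := by
        intro v
        induction v using TensorProduct.induction_on with
        | zero => simp [TensorProduct.tmul_zero]
        | tmul b' c' => simp [P2]
        | add v v' hv hv' =>
          simp only [map_add, TensorProduct.tmul_add] at hv hv' ⊢
          rw [hv, hv']
      rw [this (W.Δ b), e2]
    | add s s' hs hs' =>
      simp only [TensorProduct.add_tmul, map_add] at hs hs' ⊢
      rw [hs, hs']
  rw [c1 (W.Δ h), c2, W.coassoc h, c3 (W.Δ h)]

lemma wd_left (x y : A) (h g : H) {z : H} (hz : W.εtL z = z) :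
    Psi W M (x * M.act z 1) (W.Δ h ⊗ₜ[k] (y ⊗ₜ[k] g)) =
      Psi W M x (W.Δ (z * h) ⊗ₜ[k] (y ⊗ₜ[k] g)) := by
  rw [Δ_zmul W hz h]
  have : ∀ s : H ⊗[k] H, Psi W M x (((z ⊗ₜ[k] (1:H)) * s) ⊗ₜ[k] (y ⊗ₜ[k] g)) =
      Psi W M (x * M.act z 1) (s ⊗ₜ[k] (y ⊗ₜ[k] g)) := by
    intro s
    induction s using TensorProduct.induction_on with
    | zero => simp [TensorProduct.zero_tmul]
    | tmul a b =>
      rw [Algebra.TensorProduct.tmul_mul_tmul, Psi_tmul, Psi_tmul, M.act_mul,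
        act_Ht W M hz, ← mul_assoc, one_mul]
    | add s s' hs hs' =>
      simp only [mul_add, TensorProduct.add_tmul, map_add] at hs hs' ⊢
      rw [hs, hs']
  rw [this (W.Δ h)]

end WD
end WeakHopfAlgebra

namespace WeakHopfAlgebra
variable {k : Type*} [Field k] {H : Type*} [Ring H] [Algebra k H]
variable {A : Type*} [Ring A] [Algebra k A]
variable (W : WeakHopfAlgebra k H)

section Assoc
variable (M : ModuleAlgebra W A)

/-- auxiliary map for associativity:
`((a⊗p)⊗c)⊗(u⊗v) ↦ x(a·y)((pu)·w') ⊗ (cv)f`. -/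
noncomputable def Lam (x y w' : A) (f : H) :
    (((H ⊗[k] H) ⊗[k] H) ⊗[k] (H ⊗[k] H)) →ₗ[k] A ⊗[k] H :=
  TensorProduct.map
    (LinearMap.mulLeft k x ∘ₗ LinearMap.mul' k A ∘ₗ
      TensorProduct.map (M.act.flip y) (M.act.flip w' ∘ₗ LinearMap.mul' k H) ∘ₗ
      (TensorProduct.assoc k H H H).toLinearMap)
    (LinearMap.mulRight k f ∘ₗ LinearMap.mul' k H) ∘ₗ
  (TensorProduct.tensorTensorTensorComm k (H ⊗[k] H) H H H).toLinearMap

@[simp] lemma Lam_tmul (x y w' : A) (f a p c u v : H) :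
    Lam W M x y w' f (((a ⊗ₜ[k] p) ⊗ₜ[k] c) ⊗ₜ[k] (u ⊗ₜ[k] v)) =
      (x * (M.act a y * M.act (p * u) w')) ⊗ₜ[k] ((c * v) * f) := by
  simp [Lam]

lemma stepB (x y w' : A) (f : H) (s t : H ⊗[k] H) :
    Psi W M x (s ⊗ₜ[k] (Psi W M y (t ⊗ₜ[k] (w' ⊗ₜ[k] f)))) =
      Lam W M x y w' f (((W.Δ.rTensor H) s) ⊗ₜ[k] t) := by
  induction s using TensorProduct.induction_on with
  | zero => simp [TensorProduct.zero_tmul]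
  | tmul a c =>
    induction t using TensorProduct.induction_on with
    | zero => simp [TensorProduct.zero_tmul, TensorProduct.tmul_zero]
    | tmul u v =>
      rw [Psi_tmul, Psi_tmul, M.act_algebra a y (M.act u w'), LinearMap.rTensor_tmul]
      have inner : ∀ r : H ⊗[k] H,
          (x * LinearMap.mul' k A ((TensorProduct.map (M.act.flip y)
              (M.act.flip (M.act u w'))) r)) ⊗ₜ[k] (c * (v * f)) =
            Lam W M x y w' f ((r ⊗ₜ[k] c) ⊗ₜ[k] (u ⊗ₜ[k] v)) := by
        intro r
        induction r using TensorProduct.induction_on with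
        | zero => simp [TensorProduct.zero_tmul]
        | tmul α π => simp [M.act_mul, mul_assoc]
        | add r r' hr hr' =>
          simp only [map_add, LinearMap.add_apply, mul_add, TensorProduct.add_tmul] at hr hr' ⊢
          rw [← hr, ← hr']
      exact inner (W.Δ a)
    | add t t' ht ht' =>
      simp only [TensorProduct.add_tmul, TensorProduct.tmul_add, map_add] at ht ht' ⊢
      rw [ht, ht']
  | add s s' hs hs' =>
    simp only [TensorProduct.add_tmul, map_add] at hs hs' ⊢
    rw [hs, hs']

lemma stepA (x y w' : A) (g f : H) (s : H ⊗[k] H) :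
    smashMulAux W M ((Psi W M x (s ⊗ₜ[k] (y ⊗ₜ[k] g))) ⊗ₜ[k] (w' ⊗ₜ[k] f)) =
      Lam W M x y w' f
        (((TensorProduct.assoc k H H H).symm ((W.Δ.lTensor H) s)) ⊗ₜ[k] W.Δ g) := by
  induction s using TensorProduct.induction_on with
  | zero => simp [TensorProduct.zero_tmul]
  | tmul a b =>
    rw [Psi_tmul, aux_tmul, W.Δ_mul b g, LinearMap.lTensor_tmul]
    have SA2 : ∀ s' t : H ⊗[k] H,
        Psi W M (x * M.act a y) ((s' * t) ⊗ₜ[k] (w' ⊗ₜ[k] f)) =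
          Lam W M x y w' f
            (((TensorProduct.assoc k H H H).symm (a ⊗ₜ[k] s')) ⊗ₜ[k] t) := by
      intro s' t
      induction s' using TensorProduct.induction_on with
      | zero => simp [TensorProduct.tmul_zero, TensorProduct.zero_tmul]
      | tmul p c =>
        induction t using TensorProduct.induction_on with
        | zero => simp [TensorProduct.tmul_zero, TensorProduct.zero_tmul]
        | tmul u v =>
          rw [Algebra.TensorProduct.tmul_mul_tmul, Psi_tmul,
            TensorProduct.assoc_symm_tmul, Lam_tmul, mul_assoc]
        | add t t' ht ht' =>
          simp only [mul_add, TensorProduct.add_tmul, TensorProduct.tmul_add,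
            map_add] at ht ht' ⊢
          rw [ht, ht']
      | add s' s'' hs hs' =>
        simp only [add_mul, TensorProduct.add_tmul, TensorProduct.tmul_add,
          map_add] at hs hs' ⊢
        rw [hs, hs']
    exact SA2 (W.Δ b) (W.Δ g)
  | add s s' hs hs' =>
    simp only [TensorProduct.add_tmul, TensorProduct.tmul_add, map_add] at hs hs' ⊢
    rw [hs, hs']

lemma aux_assoc (u v w : A ⊗[k] H) :
    smashMulAux W M ((smashMulAux W M (u ⊗ₜ[k] v)) ⊗ₜ[k] w) =
      smashMulAux W M (u ⊗ₜ[k] (smashMulAux W M (v ⊗ₜ[k] w))) := by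
  induction u using TensorProduct.induction_on with
  | zero => simp [TensorProduct.zero_tmul]
  | tmul x h =>
    induction v using TensorProduct.induction_on with
    | zero => simp [TensorProduct.zero_tmul, TensorProduct.tmul_zero]
    | tmul y g =>
      induction w using TensorProduct.induction_on with
      | zero => simp [TensorProduct.tmul_zero]
      | tmul w' f =>
        rw [aux_tmul, stepA, aux_tmul W M y g w' f, aux_tmul' W M x h, stepB]
        congr 2
        rw [← W.coassoc h, LinearEquiv.symm_apply_apply]
      | add w w'' hw hw' =>
        simp only [TensorProduct.tmul_add, map_add] at hw hw' ⊢
        rw [hw, hw']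
    | add v v' hv hv' =>
      simp only [TensorProduct.tmul_add, TensorProduct.add_tmul, map_add] at hv hv' ⊢
      rw [hv, hv']
  | add u u' hu hu' =>
    simp only [TensorProduct.tmul_add, TensorProduct.add_tmul, map_add] at hu hu' ⊢
    rw [hu, hu']

end Assoc
end WeakHopfAlgebra

namespace WeakHopfAlgebra
variable {k : Type*} [Field k] {H : Type*} [Ring H] [Algebra k H]
variable {A : Type*} [Ring A] [Algebra k A]
variable (W : WeakHopfAlgebra k H)

section Units
variable (M : ModuleAlgebra W A)

lemma unit_right_core (u : A ⊗[k] H) :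
    smashMk W M (smashMulAux W M (u ⊗ₜ[k] ((1:A) ⊗ₜ[k] (1:H)))) = smashMk W M u := by
  induction u using TensorProduct.induction_on with
  | zero => simp [TensorProduct.zero_tmul]
  | tmul x h =>
    rw [aux_tmul]
    have RU : ∀ s : H ⊗[k] H, smashMk W M (Psi W M x (s ⊗ₜ[k] ((1:A) ⊗ₜ[k] (1:H)))) =
        smashMk W M (x ⊗ₜ[k] (LinearMap.mul' k H ((W.εtL.rTensor H) s))) := by
      intro s
      induction s using TensorProduct.induction_on with
      | zero => simp [TensorProduct.zero_tmul]
      | tmul a c =>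
        rw [Psi_tmul, mul_one, M.act_unit a, rel_move W M x a c, LinearMap.rTensor_tmul,
          LinearMap.mul'_apply]
      | add s s' hs hs' =>
        simp only [TensorProduct.add_tmul, TensorProduct.tmul_add, map_add] at hs hs' ⊢
        rw [hs, hs']
    rw [RU (W.Δ h), eps_t_mul_apply]
  | add u u' hu hu' =>
    simp only [TensorProduct.add_tmul, map_add] at hu hu' ⊢
    rw [hu, hu']

lemma unit_left_core (u : A ⊗[k] H) :
    smashMk W M (smashMulAux W M (((1:A) ⊗ₜ[k] (1:H)) ⊗ₜ[k] u)) = smashMk W M u := by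
  induction u using TensorProduct.induction_on with
  | zero => simp [TensorProduct.tmul_zero]
  | tmul x h =>
    rw [aux_tmul]
    have LV : ∀ s : H ⊗[k] H,
        smashMk W M (Psi W M (1:A) (((W.εtL.lTensor H) s) ⊗ₜ[k] (x ⊗ₜ[k] h))) =
          smashMk W M ((LinearMap.mul' k A ((TensorProduct.map (M.act.flip x)
            (M.act.flip (1:A))) s)) ⊗ₜ[k] h) := by
      intro s
      induction s using TensorProduct.induction_on with
      | zero => simp [TensorProduct.zero_tmul]
      | tmul a c =>
        rw [LinearMap.lTensor_tmul, Psi_tmul, one_mul, ← rel_move W M (M.act a x) c h,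
          TensorProduct.map_tmul, LinearMap.mul'_apply, ← M.act_unit c]
        rfl
      | add s s' hs hs' =>
        simp only [TensorProduct.add_tmul, TensorProduct.tmul_add, map_add] at hs hs' ⊢
        rw [hs, hs']
    conv_lhs => rw [← Ne_e W]
    rw [LV (W.Δ 1), ← M.act_algebra, M.act_one, mul_one]
  | add u u' hu hu' =>
    simp only [TensorProduct.tmul_add, map_add] at hu hu' ⊢
    rw [hu, hu']

end Units

section Assemble
variable (M : ModuleAlgebra W A)

noncomputable def mu0 : (A ⊗[k] H) →ₗ[k] (A ⊗[k] H) →ₗ[k] Smash W M :=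
  TensorProduct.curry ((smashMk W M) ∘ₗ (smashMulAux W M))

lemma mu0_apply (u v : A ⊗[k] H) :
    mu0 W M u v = smashMk W M (smashMulAux W M (u ⊗ₜ[k] v)) := rfl

lemma h_left : smashRel W M ≤ LinearMap.ker (mu0 W M) := by
  rw [smashRel, Submodule.span_le]
  rintro r ⟨x, z, h, hz, rfl⟩
  rw [SetLike.mem_coe, LinearMap.mem_ker]
  apply LinearMap.ext
  intro v
  rw [map_sub, LinearMap.sub_apply, LinearMap.zero_apply, sub_eq_zero,
    mu0_apply, mu0_apply]
  congr 1
  induction v using TensorProduct.induction_on with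
  | zero => simp [TensorProduct.tmul_zero]
  | tmul y g => rw [aux_tmul, aux_tmul, wd_left W M x y h g hz]
  | add v v' hv hv' =>
    simp only [TensorProduct.tmul_add, map_add] at hv hv' ⊢
    rw [hv, hv']

noncomputable def mu1 : Smash W M →ₗ[k] (A ⊗[k] H) →ₗ[k] Smash W M :=
  (smashRel W M).liftQ (mu0 W M) (h_left W M)

lemma h_right : smashRel W M ≤ LinearMap.ker (mu1 W M).flip := by
  rw [smashRel, Submodule.span_le]
  rintro r ⟨y, z, g, hz, rfl⟩
  rw [SetLike.mem_coe, LinearMap.mem_ker]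
  apply LinearMap.ext
  intro s
  obtain ⟨u, rfl⟩ := (smashRel W M).mkQ_surjective s
  have e1 : mu1 W M ((smashRel W M).mkQ u) = mu0 W M u := by
    rw [mu1]
    exact LinearMap.congr_fun (Submodule.liftQ_mkQ (smashRel W M) (mu0 W M) (h_left W M)) u
  erw [LinearMap.flip_apply, LinearMap.zero_apply, e1]
  rw [map_sub, mu0_apply, mu0_apply,
    sub_eq_zero]
  clear e1
  induction u using TensorProduct.induction_on with
  | zero => simp [TensorProduct.zero_tmul]
  | tmul x h => rw [aux_tmul, aux_tmul, wd_right W M x h y hz g]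
  | add u u' hu hu' =>
    simp only [TensorProduct.add_tmul, map_add] at hu hu' ⊢
    rw [hu, hu']

noncomputable def smashMul : Smash W M →ₗ[k] Smash W M →ₗ[k] Smash W M :=
  ((smashRel W M).liftQ (mu1 W M).flip (h_right W M)).flip

lemma smashMul_mk (u v : A ⊗[k] H) :
    smashMul W M (smashMk W M u) (smashMk W M v) =
      smashMk W M (smashMulAux W M (u ⊗ₜ[k] v)) := by
  have e2 : ((smashRel W M).liftQ (mu1 W M).flip (h_right W M)) ((smashRel W M).mkQ v) =
      (mu1 W M).flip v :=
    LinearMap.congr_fun (Submodule.liftQ_mkQ (smashRel W M) (mu1 W M).flip (h_right W M)) v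
  have e1 : mu1 W M ((smashRel W M).mkQ u) = mu0 W M u := by
    rw [mu1]
    exact LinearMap.congr_fun (Submodule.liftQ_mkQ (smashRel W M) (mu0 W M) (h_left W M)) u
  show (((smashRel W M).liftQ (mu1 W M).flip (h_right W M)) ((smashRel W M).mkQ v))
      ((smashRel W M).mkQ u) = _
  rw [e2]
  erw [LinearMap.flip_apply, e1, mu0_apply]

lemma smashMul_assoc (a b c : Smash W M) :
    smashMul W M (smashMul W M a b) c = smashMul W M a (smashMul W M b c) := by
  obtain ⟨u, rfl⟩ := (smashRel W M).mkQ_surjective a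
  obtain ⟨v, rfl⟩ := (smashRel W M).mkQ_surjective b
  obtain ⟨w, rfl⟩ := (smashRel W M).mkQ_surjective c
  have hu : ∀ t : A ⊗[k] H, (smashRel W M).mkQ t = smashMk W M t := fun _ => rfl
  rw [hu, hu, hu, smashMul_mk, smashMul_mk, smashMul_mk, smashMul_mk, aux_assoc]

lemma smashMul_one (s : Smash W M) :
    smashMul W M (smashOne W M) s = s ∧ smashMul W M s (smashOne W M) = s := by
  obtain ⟨u, rfl⟩ := (smashRel W M).mkQ_surjective s
  have hu : ∀ t : A ⊗[k] H, (smashRel W M).mkQ t = smashMk W M t := fun _ => rfl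
  rw [hu, smashOne]
  constructor
  · rw [smashMul_mk, unit_left_core]
  · rw [smashMul_mk, unit_right_core]

end Assemble
end WeakHopfAlgebra



open WeakHopfAlgebra TensorProduct in
/-- The smash product `A # H = A ⊗_{H_t} H` with multiplication
`(x#h)(y#g) = x(h₁·y) # h₂g` and unit `1#1` is an associative unital algebra. -/
theorem smash_product_algebra {k : Type*} [Field k] {H : Type*} [Ring H] [Algebra k H]
    [FiniteDimensional k H] {A : Type*} [Ring A] [Algebra k A]
    (W : WeakHopfAlgebra k H) (M : ModuleAlgebra W A) :
    ∃ μ : Smash W M →ₗ[k] Smash W M →ₗ[k] Smash W M,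
      IsSmashMul W M μ ∧
      (∀ a b c : Smash W M, μ (μ a b) c = μ a (μ b c)) ∧
      (∀ s : Smash W M, μ (smashOne W M) s = s ∧ μ s (smashOne W M) = s) :=
  ⟨smashMul W M, fun u v => smashMul_mk W M u v, smashMul_assoc W M, smashMul_one W M⟩
end
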